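/- Let p(z) = p₀z² + 2p₁z + p₂ and q(z) = q₀z² + 2q₁z + q₂ be nonzero real quadratics with ⟨p,q⟩ = 0, with polarizations p(x,y) = p₀xy + p₁(x+y) + p₂ and q(x,y) = q₀xy + q₁(x+y) + q₂, and let A, B : ℝ → ℝ be infinitely differentiable. Then the following are equivalent: (i) there exists a real number k such that for all real x, y: p(x,y)²A''(x) − 6(p₀y + p₁)p(x,y)A'(x) + 12(p₀y + p₁)²A(x) + p(x,y)²B''(y) − 6(p₀x + p₁)p(x,y)B'(y) + 12(p₀x + p₁)²B(y) = k(x−y)q(x,y); (ii) there exist a real quadratic ρ with ⟨ρ,p⟩ = 0 and a real polynomial R of degree at most 4 satisfying (pq)''''R − (pq)'''R' + (pq)''R'' − (pq)'R''' + (pq)R'''' = 0 identically (i.e. R is apolar to the quartic pq), such that A(z) = p(z)ρ(z) + R(z) and B(z) = p(z)ρ(z) − R(z) for all z. -/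

import Mathlib

open scoped ContDiff

lemma HasDerivAt.of_eq' {f : ℝ → ℝ} {v x v' : ℝ} (h : HasDerivAt f v x) (e : v = v') :
    HasDerivAt f v' x := e ▸ h

lemma hasDerivAt_iter (A : ℝ → ℝ) (hA : ContDiff ℝ ∞ A) (n : ℕ) (x : ℝ) :
    HasDerivAt (iteratedDeriv n A) (iteratedDeriv (n + 1) A x) x := by
  have h1 : ContDiff ℝ ∞ (iteratedDeriv n A) := by
    rw [iteratedDeriv_eq_iterate]; exact hA.iterate_deriv n
  rw [iteratedDeriv_succ]
  exact ((h1.differentiable (by simp)).differentiableAt).hasDerivAt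

lemma op_hasDerivAt (A : ℝ → ℝ) (hA : ContDiff ℝ ∞ A) (α β : ℝ) (n : ℕ) (c d : ℝ) (x : ℝ) :
    HasDerivAt (fun t => (α*t+β)^2 * iteratedDeriv (n+2) A t
        + c*α*(α*t+β) * iteratedDeriv (n+1) A t + d*α^2 * iteratedDeriv n A t)
      ((α*x+β)^2 * iteratedDeriv (n+3) A x + (c+2)*α*(α*x+β) * iteratedDeriv (n+2) A x
        + (c+d)*α^2 * iteratedDeriv (n+1) A x) x := by
  have hu : HasDerivAt (fun t : ℝ => α*t+β) α x := by
    simpa using ((hasDerivAt_id x).const_mul α).add_const β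
  have hu2 : HasDerivAt (fun t : ℝ => (α*t+β)^2) (2*(α*x+β)^1*α) x := hu.pow 2
  have t1 := hu2.mul (hasDerivAt_iter A hA (n+2) x)
  have t2 := (hu.const_mul (c*α)).mul (hasDerivAt_iter A hA (n+1) x)
  have t3 := (hasDerivAt_iter A hA n x).const_mul (d*α^2)
  refine ((t1.add t2).add t3).of_eq' ?_
  have e1 : iteratedDeriv (n+2+1) A x = iteratedDeriv (n+3) A x := rfl
  have e2 : iteratedDeriv (n+1+1) A x = iteratedDeriv (n+2) A x := rfl
  rw [e1, e2]; ring

lemma third_deriv_vanish (A : ℝ → ℝ) (hA : ContDiff ℝ ∞ A) (α β c2 c1 c0 : ℝ)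
    (h : ∀ x, (α*x+β)^2 * iteratedDeriv 2 A x + (-6)*α*(α*x+β) * iteratedDeriv 1 A x
        + 12*α^2 * iteratedDeriv 0 A x + (c2*x^2 + c1*x + c0) = 0) :
    ∀ x, (α*x+β)^2 * iteratedDeriv 5 A x = 0 := by
  have h1 : ∀ x, (α*x+β)^2 * iteratedDeriv 3 A x + (-4)*α*(α*x+β) * iteratedDeriv 2 A x
      + 6*α^2 * iteratedDeriv 1 A x + (2*c2*x + c1) = 0 := by
    intro x
    have hq : HasDerivAt (fun t : ℝ => c2*t^2 + c1*t + c0) (2*c2*x + c1) x := by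
      have := (((hasDerivAt_pow 2 x).const_mul c2).add ((hasDerivAt_id x).const_mul c1)).add_const c0
      refine this.of_eq' ?_; push_cast; ring
    have hF := (op_hasDerivAt A hA α β 0 (-6) 12 x).add hq
    have hF0 : HasDerivAt (fun _ : ℝ => (0:ℝ))
        ((α*x+β)^2 * iteratedDeriv (0+3) A x + ((-6)+2)*α*(α*x+β) * iteratedDeriv (0+2) A x
          + ((-6)+12)*α^2 * iteratedDeriv (0+1) A x + (2*c2*x + c1)) x := by
      refine HasDerivAt.congr_of_eventuallyEq hF (Filter.Eventually.of_forall fun t => ?_)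
      exact (h t).symm
    have := hF0.unique (hasDerivAt_const x 0)
    have e1 : iteratedDeriv (0+3) A x = iteratedDeriv 3 A x := rfl
    have e2 : iteratedDeriv (0+2) A x = iteratedDeriv 2 A x := rfl
    have e3 : iteratedDeriv (0+1) A x = iteratedDeriv 1 A x := rfl
    rw [e1, e2, e3] at this
    linear_combination this
  have h2 : ∀ x, (α*x+β)^2 * iteratedDeriv 4 A x + (-2)*α*(α*x+β) * iteratedDeriv 3 A x
      + 2*α^2 * iteratedDeriv 2 A x + 2*c2 = 0 := by
    intro x
    have hq : HasDerivAt (fun t : ℝ => 2*c2*t + c1) (2*c2) x := by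
      simpa using ((hasDerivAt_id x).const_mul (2*c2)).add_const c1
    have hF := (op_hasDerivAt A hA α β 1 (-4) 6 x).add hq
    have hF0 : HasDerivAt (fun _ : ℝ => (0:ℝ))
        ((α*x+β)^2 * iteratedDeriv (1+3) A x + ((-4)+2)*α*(α*x+β) * iteratedDeriv (1+2) A x
          + ((-4)+6)*α^2 * iteratedDeriv (1+1) A x + 2*c2) x := by
      refine HasDerivAt.congr_of_eventuallyEq hF (Filter.Eventually.of_forall fun t => ?_)
      exact (h1 t).symm
    have := hF0.unique (hasDerivAt_const x 0)
    have e1 : iteratedDeriv (1+3) A x = iteratedDeriv 4 A x := rfl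
    have e2 : iteratedDeriv (1+2) A x = iteratedDeriv 3 A x := rfl
    have e3 : iteratedDeriv (1+1) A x = iteratedDeriv 2 A x := rfl
    rw [e1, e2, e3] at this
    linear_combination this
  intro x
  have hF := (op_hasDerivAt A hA α β 2 (-2) 2 x).add_const (2*c2)
  have hF0 : HasDerivAt (fun _ : ℝ => (0:ℝ))
      ((α*x+β)^2 * iteratedDeriv (2+3) A x + ((-2)+2)*α*(α*x+β) * iteratedDeriv (2+2) A x
        + ((-2)+2)*α^2 * iteratedDeriv (2+1) A x) x := by
    refine HasDerivAt.congr_of_eventuallyEq hF (Filter.Eventually.of_forall fun t => ?_)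
    exact (h2 t).symm
  have := hF0.unique (hasDerivAt_const x 0)
  have e1 : iteratedDeriv (2+3) A x = iteratedDeriv 5 A x := rfl
  rw [e1] at this
  linear_combination this
open scoped ContDiff

lemma HasDerivAt.of_eq'' {f : ℝ → ℝ} {v x v' : ℝ} (h : HasDerivAt f v x) (e : v = v') :
    HasDerivAt f v' x := e ▸ h

lemma d5_zero (p0 p1 p2 : ℝ) (hp : ¬(p0 = 0 ∧ p1 = 0 ∧ p2 = 0)) (f : ℝ → ℝ)
    (hf : Continuous f)
    (h : ∀ x y : ℝ, ((p0*x+p1)*y + (p1*x+p2))^2 * f x = 0) : ∀ x, f x = 0 := by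
  by_contra hc
  push_neg at hc
  obtain ⟨x0, hx0⟩ := hc
  have hS : ∀ x, f x ≠ 0 → (p0*x+p1 = 0 ∧ p1*x+p2 = 0) := by
    intro x hx
    have h0 := h x 0
    have h1 := h x 1
    have e0 : p1*x+p2 = 0 := by
      rcases mul_eq_zero.mp h0 with h' | h'
      · have := pow_eq_zero_iff (n := 2) two_ne_zero |>.mp h'
        linarith [this]
      · exact absurd h' hx
    have e1 : p0*x+p1 = 0 := by
      rcases mul_eq_zero.mp h1 with h' | h'
      · have := pow_eq_zero_iff (n := 2) two_ne_zero |>.mp h'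
        linarith [this]
      · exact absurd h' hx
    exact ⟨e1, e0⟩
  have hopen : IsOpen {x : ℝ | f x ≠ 0} := by
    have : {x : ℝ | f x ≠ 0} = f ⁻¹' ({0}ᶜ) := rfl
    rw [this]
    exact (isOpen_compl_singleton).preimage hf
  obtain ⟨ε, hε, hball⟩ := Metric.isOpen_iff.mp hopen x0 hx0
  have hx1 : f (x0 + ε/2) ≠ 0 := by
    apply hball
    rw [Metric.mem_ball, Real.dist_eq, show x0 + ε/2 - x0 = ε/2 by ring,
      abs_of_pos (by linarith)]
    linarith
  obtain ⟨ha, hb⟩ := hS x0 hx0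
  obtain ⟨ha', hb'⟩ := hS (x0 + ε/2) hx1
  have hp0 : p0 = 0 := by
    have hz : p0 * (ε/2) = 0 := by linear_combination ha' - ha
    rcases mul_eq_zero.mp hz with h' | h'
    · exact h'
    · linarith
  have hp1 : p1 = 0 := by linear_combination ha - x0 * hp0
  have hp2 : p2 = 0 := by linear_combination hb - x0 * hp1
  exact hp ⟨hp0, hp1, hp2⟩

lemma antideriv_step (f : ℝ → ℝ) (c3 c2 c1 c0 : ℝ)
    (h : ∀ x, HasDerivAt f (c3*x^3 + c2*x^2 + c1*x + c0) x) (x : ℝ) :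
    f x = c3/4*x^4 + c2/3*x^3 + c1/2*x^2 + c0*x + f 0 := by
  have hder : ∀ t, HasDerivAt (fun u => f u - (c3/4*u^4 + c2/3*u^3 + c1/2*u^2 + c0*u)) 0 t := by
    intro t
    have hpoly : HasDerivAt (fun u : ℝ => c3/4*u^4 + c2/3*u^3 + c1/2*u^2 + c0*u)
        (c3*t^3 + c2*t^2 + c1*t + c0) t := by
      have h4 := (hasDerivAt_pow 4 t).const_mul (c3/4)
      have h3 := (hasDerivAt_pow 3 t).const_mul (c2/3)
      have h2 := (hasDerivAt_pow 2 t).const_mul (c1/2)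
      have h1 := (hasDerivAt_id t).const_mul c0
      refine (((h4.add h3).add h2).add h1).of_eq'' ?_
      push_cast; ring
    refine ((h t).sub hpoly).of_eq'' ?_; ring
  have key := is_const_of_deriv_eq_zero (𝕜 := ℝ)
    (f := fun u => f u - (c3/4*u^4 + c2/3*u^3 + c1/2*u^2 + c0*u))
    (fun t => (hder t).differentiableAt) (fun t => (hder t).deriv) x 0
  linear_combination key

lemma quartic_of_d5 (A : ℝ → ℝ) (hA : ContDiff ℝ ∞ A) (h5 : ∀ x, iteratedDeriv 5 A x = 0)
    (x : ℝ) :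
    A x = (iteratedDeriv 4 A 0/24)*x^4 + (iteratedDeriv 3 A 0/6)*x^3
      + (iteratedDeriv 2 A 0/2)*x^2 + (iteratedDeriv 1 A 0)*x + A 0 := by
  have hiter : ∀ n u, HasDerivAt (iteratedDeriv n A) (iteratedDeriv (n+1) A u) u := by
    intro n u
    have h1 : ContDiff ℝ ∞ (iteratedDeriv n A) := by
      rw [iteratedDeriv_eq_iterate]; exact hA.iterate_deriv n
    rw [iteratedDeriv_succ]
    exact ((h1.differentiable (by simp)).differentiableAt).hasDerivAt
  have h4 : ∀ t, iteratedDeriv 4 A t = iteratedDeriv 4 A 0 := by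
    intro t
    have := antideriv_step (iteratedDeriv 4 A) 0 0 0 0
      (fun u => (hiter 4 u).of_eq'' (by rw [show (4:ℕ)+1 = 5 from rfl, h5 u]; ring)) t
    simpa using this
  have h3 : ∀ t, iteratedDeriv 3 A t = iteratedDeriv 4 A 0 * t + iteratedDeriv 3 A 0 := by
    intro t
    have := antideriv_step (iteratedDeriv 3 A) 0 0 0 (iteratedDeriv 4 A 0)
      (fun u => (hiter 3 u).of_eq'' (by rw [show (3:ℕ)+1 = 4 from rfl, h4 u]; ring)) t
    rw [this]; ring
  have h2 : ∀ t, iteratedDeriv 2 A t = iteratedDeriv 4 A 0/2 * t^2 + iteratedDeriv 3 A 0 * t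
      + iteratedDeriv 2 A 0 := by
    intro t
    have := antideriv_step (iteratedDeriv 2 A) 0 0 (iteratedDeriv 4 A 0) (iteratedDeriv 3 A 0)
      (fun u => (hiter 2 u).of_eq'' (by rw [show (2:ℕ)+1 = 3 from rfl, h3 u]; ring)) t
    rw [this]; ring
  have h1 : ∀ t, iteratedDeriv 1 A t = iteratedDeriv 4 A 0/6 * t^3 + iteratedDeriv 3 A 0/2 * t^2
      + iteratedDeriv 2 A 0 * t + iteratedDeriv 1 A 0 := by
    intro t
    have := antideriv_step (iteratedDeriv 1 A) 0 (iteratedDeriv 4 A 0/2) (iteratedDeriv 3 A 0)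
      (iteratedDeriv 2 A 0)
      (fun u => (hiter 1 u).of_eq'' (by rw [show (1:ℕ)+1 = 2 from rfl, h2 u]; ring)) t
    rw [this]; ring
  have h0 : ∀ u, HasDerivAt A (iteratedDeriv 4 A 0/6 * u^3 + iteratedDeriv 3 A 0/2 * u^2
      + iteratedDeriv 2 A 0 * u + iteratedDeriv 1 A 0) u := by
    intro u
    have := (hiter 0 u).of_eq'' (by rw [show (0:ℕ)+1 = 1 from rfl, h1 u])
    rwa [iteratedDeriv_zero] at this
  have := antideriv_step A (iteratedDeriv 4 A 0/6) (iteratedDeriv 3 A 0/2)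
    (iteratedDeriv 2 A 0) (iteratedDeriv 1 A 0) h0 x
  rw [this]; ring

lemma hasDerivAt_quarticFun (c0 c1 c2 c3 c4 x : ℝ) :
    HasDerivAt (fun z : ℝ => c0*z^4 + c1*z^3 + c2*z^2 + c3*z + c4)
      (4*c0*x^3 + 3*c1*x^2 + 2*c2*x + c3) x := by
  have h4 := (hasDerivAt_pow 4 x).const_mul c0
  have h3 := (hasDerivAt_pow 3 x).const_mul c1
  have h2 := (hasDerivAt_pow 2 x).const_mul c2
  have h1 := (hasDerivAt_id x).const_mul c3
  refine ((((h4.add h3).add h2).add h1).add_const c4).of_eq'' ?_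
  push_cast; ring

lemma hasDerivAt_cubicFun (c0 c1 c2 c3 x : ℝ) :
    HasDerivAt (fun z : ℝ => c0*z^3 + c1*z^2 + c2*z + c3)
      (3*c0*x^2 + 2*c1*x + c2) x := by
  have h3 := (hasDerivAt_pow 3 x).const_mul c0
  have h2 := (hasDerivAt_pow 2 x).const_mul c1
  have h1 := (hasDerivAt_id x).const_mul c2
  refine (((h3.add h2).add h1).add_const c3).of_eq'' ?_
  push_cast; ring

lemma derivs_of_quartic (A : ℝ → ℝ) (c0 c1 c2 c3 c4 : ℝ)
    (h : ∀ z, A z = c0*z^4 + c1*z^3 + c2*z^2 + c3*z + c4) :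
    (∀ x, deriv A x = 4*c0*x^3 + 3*c1*x^2 + 2*c2*x + c3)
      ∧ (∀ x, deriv (deriv A) x = 12*c0*x^2 + 6*c1*x + 2*c2) := by
  have hA : A = fun z => c0*z^4 + c1*z^3 + c2*z^2 + c3*z + c4 := funext h
  have hd1 : ∀ x, deriv A x = 4*c0*x^3 + 3*c1*x^2 + 2*c2*x + c3 := by
    intro x; rw [hA]; exact (hasDerivAt_quarticFun c0 c1 c2 c3 c4 x).deriv
  refine ⟨hd1, ?_⟩
  intro x
  have hd1' : deriv A = fun x => 4*c0*x^3 + 3*c1*x^2 + 2*c2*x + c3 := funext hd1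
  rw [hd1']
  exact ((hasDerivAt_cubicFun (4*c0) (3*c1) (2*c2) c3 x).of_eq'' (by ring)).deriv

lemma eq_of_mul_sub {c a b : ℝ} (hc : c ≠ 0) (h : c * (a - b) = 0) : a = b := by
  rcases mul_eq_zero.mp h with h' | h'
  · exact absurd h' hc
  · linarith

lemma eq_zero_of_mul' {c a : ℝ} (hc : c ≠ 0) (h : c * a = 0) : a = 0 := by
  rcases mul_eq_zero.mp h with h' | h'
  · exact absurd h' hc
  · exact h'

lemma claimS (p0 p1 p2 s0 s1 s2 s3 s4 : ℝ) (hp : ¬(p0 = 0 ∧ p1 = 0 ∧ p2 = 0))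
    (hG1 : 4*p2^2*s2 - 12*p1*p2*s3 + 24*p1^2*s4 = 0)
    (hG2 : 6*p2^2*s1 - 4*p1*p2*s2 - 6*p0*p2*s3 + 24*p0*p1*s4 = 0)
    (hG3 : 12*p2^2*s0 - 6*p1*p2*s1 + 4*p1^2*s2 - 6*p0*p1*s3 + 12*p0^2*s4 = 0)
    (hG4 : 24*p1*p2*s1 - 16*p1^2*s2 - 16*p0*p2*s2 + 24*p0*p1*s3 = 0)
    (hG5 : 24*p1*p2*s0 - 6*p0*p2*s1 - 4*p0*p1*s2 + 6*p0^2*s3 = 0)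
    (hG6 : 24*p1^2*s0 - 12*p0*p1*s1 + 4*p0^2*s2 = 0) :
    ∃ ρ0 ρ1 ρ2 : ℝ, 2*ρ1*p1 - (ρ2*p0 + ρ0*p2) = 0 ∧
      s0 = p0*ρ0 ∧ s1 = 2*p0*ρ1 + 2*p1*ρ0 ∧ s2 = p0*ρ2 + 4*p1*ρ1 + p2*ρ0 ∧
      s3 = 2*p1*ρ2 + 2*p2*ρ1 ∧ s4 = p2*ρ2 := by
  by_cases hp0 : p0 = 0
  · by_cases hp1 : p1 = 0
    · -- p2 ≠ 0
      have hp2 : p2 ≠ 0 := fun h => hp ⟨hp0, hp1, h⟩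
      subst hp0; subst hp1
      refine ⟨0, s3/(2*p2), s4/p2, by ring, ?_, ?_, ?_, ?_, ?_⟩
      · exact eq_of_mul_sub (c := p2^2) (pow_ne_zero 2 hp2) (by linear_combination (1/12)*hG3)
      · exact eq_of_mul_sub (c := p2^2) (pow_ne_zero 2 hp2) (by linear_combination (1/6)*hG2)
      · exact eq_of_mul_sub (c := p2^2) (pow_ne_zero 2 hp2) (by linear_combination (1/4)*hG1)
      · field_simp
        try ring
      · field_simp
        try ring
    · -- p0 = 0, p1 ≠ 0
      subst hp0
      obtain ⟨ρ0, ρ1, ρ2, k0, k1, k2⟩ :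
          ∃ ρ0 ρ1 ρ2 : ℝ, 2*p1*ρ0 = s1 ∧ 4*p1*ρ1 = s2 - p2*ρ0 ∧ 2*p1*ρ2 = s3 - 2*p2*ρ1 := by
        refine ⟨s1/(2*p1), (s2 - p2*(s1/(2*p1)))/(4*p1),
          (s3 - 2*p2*((s2 - p2*(s1/(2*p1)))/(4*p1)))/(2*p1), ?_, ?_, ?_⟩ <;> (field_simp; try ring)
      refine ⟨ρ0, ρ1, ρ2, ?_, ?_, ?_, ?_, ?_, ?_⟩
      · exact eq_zero_of_mul' (c := p1^2) (pow_ne_zero 2 hp1)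
          (by linear_combination (-3/4)*p1*p2*k0 + (1/2)*p1^2*k1 + (-1/32)*hG4)
      · exact eq_of_mul_sub (c := p1^2) (pow_ne_zero 2 hp1) (by linear_combination (1/24)*hG6)
      · linear_combination -k0
      · linear_combination -k1
      · linear_combination -k2
      · exact eq_of_mul_sub (c := p1^3) (pow_ne_zero 3 hp1)
          (by linear_combination (-1/8)*p2^3*k0 + (1/4)*p1*p2^2*k1 + (-1/2)*p1^2*p2*k2
            + (1/24)*p1*hG1 + (-1/48)*p2*hG2)
  · -- p0 ≠ 0
    obtain ⟨ρ0, ρ1, ρ2, k0, k1, k2⟩ :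
        ∃ ρ0 ρ1 ρ2 : ℝ, p0*ρ0 = s0 ∧ 2*p0*ρ1 = s1 - 2*p1*ρ0 ∧ p0*ρ2 = s2 - 4*p1*ρ1 - p2*ρ0 := by
      refine ⟨s0/p0, (s1 - 2*p1*(s0/p0))/(2*p0),
        (s2 - 4*p1*((s1 - 2*p1*(s0/p0))/(2*p0)) - p2*(s0/p0))/p0, ?_, ?_, ?_⟩ <;> (field_simp; try ring)
    refine ⟨ρ0, ρ1, ρ2, ?_, ?_, ?_, ?_, ?_, ?_⟩
    · exact eq_zero_of_mul' (c := p0^2) (pow_ne_zero 2 hp0)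
        (by linear_combination (-6*p1^2)*k0 + 3*p0*p1*k1 + (-1)*p0^2*k2 + (-1/4)*hG6)
    · exact k0.symm
    · linear_combination -k1
    · linear_combination -k2
    · exact eq_of_mul_sub (c := p0^3) (pow_ne_zero 3 hp0)
        (by linear_combination (4*p0*p1*p2 - 8*p1^3)*k0 + (-p0^2*p2 + 4*p0*p1^2)*k1
          + (-2*p0^2*p1)*k2 + (1/6)*p0*hG5 + (-1/3)*p1*hG6)
    · exact eq_of_mul_sub (c := p0^3) (pow_ne_zero 3 hp0)
        (by linear_combination (p0*p2^2 - 4*p1^2*p2)*k0 + 2*p0*p1*p2*k1 + (-p0^2*p2)*k2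
          + (1/12)*p0*hG3 + (1/16)*p0*hG4 + (-1/6)*p1*hG5)

lemma eq_zero_of_mul'' {c a : ℝ} (hc : c ≠ 0) (h : c * a = 0) : a = 0 := by
  rcases mul_eq_zero.mp h with h' | h'
  · exact absurd h' hc
  · exact h'

section claimR
variable (p0 p1 p2 q0 q1 q2 r0 r1 r2 r3 r4 : ℝ)

lemma claimR_fwd (k : ℝ) (hp : ¬(p0 = 0 ∧ p1 = 0 ∧ p2 = 0))
    (horth : 2*p1*q1 - (p2*q0 + p0*q2) = 0)
    (hE0 : (24*p1*p2*r0 - (12*p1^2+6*p0*p2)*r1 + 12*p0*p1*r2 - 6*p0^2*r3) = k*q0)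
    (hE1 : (12*p2^2*r0 - 6*p1*p2*r1 + 6*p0*p1*r3 - 12*p0^2*r4) = k*q1)
    (hE2 : (6*p2^2*r1 - 12*p1*p2*r2 + (12*p1^2+6*p0*p2)*r3 - 24*p0*p1*r4) = k*q2) :
    24*p2*q2*r0 - 12*(p2*q1+p1*q2)*r1 + (4*p2*q0+16*p1*q1+4*p0*q2)*r2 - 12*(p1*q0+p0*q1)*r3 + 24*p0*q0*r4 = 0 := by
  have hC0 : (12*p2^2*r0 - 6*p1*p2*r1 + 6*p0*p1*r3 - 12*p0^2*r4)*q2 - (6*p2^2*r1 - 12*p1*p2*r2 + (12*p1^2+6*p0*p2)*r3 - 24*p0*p1*r4)*q1 = 0 := by linear_combination q2*hE1 - q1*hE2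
  have hC1 : (24*p1*p2*r0 - (12*p1^2+6*p0*p2)*r1 + 12*p0*p1*r2 - 6*p0^2*r3)*q2 - (6*p2^2*r1 - 12*p1*p2*r2 + (12*p1^2+6*p0*p2)*r3 - 24*p0*p1*r4)*q0 = 0 := by linear_combination q2*hE0 - q0*hE2
  have hC2 : (24*p1*p2*r0 - (12*p1^2+6*p0*p2)*r1 + 12*p0*p1*r2 - 6*p0^2*r3)*q1 - (12*p2^2*r0 - 6*p1*p2*r1 + 6*p0*p1*r3 - 12*p0^2*r4)*q0 = 0 := by linear_combination q1*hE0 - q0*hE1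
  by_cases hp0 : p0 = 0
  · by_cases hp1 : p1 = 0
    · have hp2 : p2 ≠ 0 := fun h => hp ⟨hp0, hp1, h⟩
      refine eq_zero_of_mul'' (pow_ne_zero 2 hp2) ?_
      linear_combination 2*p2*hC0 + (-4*p2^2*r2 + 12*p1*p2*r3 - 24*p0*p2*r4)*horth
    · refine eq_zero_of_mul'' (pow_ne_zero 2 hp1) ?_
      linear_combination p1*hC1 + (-6*p1*p2*r1 + 8*p1^2*r2 - 6*p0*p1*r3)*horth
  · refine eq_zero_of_mul'' (pow_ne_zero 2 hp0) ?_
    linear_combination 2*p0*hC2 + (-24*p0*p2*r0 + 12*p0*p1*r1 - 4*p0^2*r2)*horth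

lemma claimR_rev (hp : ¬(p0 = 0 ∧ p1 = 0 ∧ p2 = 0)) (hq : ¬(q0 = 0 ∧ q1 = 0 ∧ q2 = 0))
    (horth : 2*p1*q1 - (p2*q0 + p0*q2) = 0)
    (hapol : 24*p2*q2*r0 - 12*(p2*q1+p1*q2)*r1 + (4*p2*q0+16*p1*q1+4*p0*q2)*r2 - 12*(p1*q0+p0*q1)*r3 + 24*p0*q0*r4 = 0) :
    ∃ k : ℝ, (24*p1*p2*r0 - (12*p1^2+6*p0*p2)*r1 + 12*p0*p1*r2 - 6*p0^2*r3) = k*q0 ∧ (12*p2^2*r0 - 6*p1*p2*r1 + 6*p0*p1*r3 - 12*p0^2*r4) = k*q1 ∧ (6*p2^2*r1 - 12*p1*p2*r2 + (12*p1^2+6*p0*p2)*r3 - 24*p0*p1*r4) = k*q2 := by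
  have hvne : ¬(p2*q2 = 0 ∧ p2*q1 + p1*q2 = 0 ∧ p2*q0 + 4*p1*q1 + p0*q2 = 0
      ∧ p1*q0 + p0*q1 = 0 ∧ p0*q0 = 0) := by
    rintro ⟨v0, v1, v2, v3, v4⟩
    have h11 : p1*q1 = 0 := by linear_combination (1/6)*v2 + (1/6)*horth
    have h20 : p2*q0 + p0*q2 = 0 := by linear_combination v2 - 4*h11
    by_cases hp0 : p0 = 0
    · by_cases hp1 : p1 = 0
      · have hp2 : p2 ≠ 0 := fun h => hp ⟨hp0, hp1, h⟩
        have hq2 : q2 = 0 := eq_zero_of_mul'' hp2 v0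
        have hq1 : q1 = 0 := eq_zero_of_mul'' hp2 (by linear_combination v1 - q2*hp1)
        have hq0 : q0 = 0 := eq_zero_of_mul'' hp2 (by linear_combination h20 - q2*hp0)
        exact hq ⟨hq0, hq1, hq2⟩
      · have hq1 : q1 = 0 := eq_zero_of_mul'' hp1 h11
        have hq0 : q0 = 0 := eq_zero_of_mul'' hp1 (by linear_combination v3 - q1*hp0)
        have hq2 : q2 = 0 := eq_zero_of_mul'' hp1 (by linear_combination v1 - p2*hq1)
        exact hq ⟨hq0, hq1, hq2⟩
    · have hq0 : q0 = 0 := eq_zero_of_mul'' hp0 v4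
      have hq1 : q1 = 0 := eq_zero_of_mul'' hp0 (by linear_combination v3 - p1*hq0)
      have hq2 : q2 = 0 := eq_zero_of_mul'' hp0 (by linear_combination h20 - p2*hq0)
      exact hq ⟨hq0, hq1, hq2⟩
  obtain ⟨hC0, hC1, hC2⟩ :
      ((12*p2^2*r0 - 6*p1*p2*r1 + 6*p0*p1*r3 - 12*p0^2*r4)*q2 - (6*p2^2*r1 - 12*p1*p2*r2 + (12*p1^2+6*p0*p2)*r3 - 24*p0*p1*r4)*q1 = 0) ∧ ((24*p1*p2*r0 - (12*p1^2+6*p0*p2)*r1 + 12*p0*p1*r2 - 6*p0^2*r3)*q2 - (6*p2^2*r1 - 12*p1*p2*r2 + (12*p1^2+6*p0*p2)*r3 - 24*p0*p1*r4)*q0 = 0) ∧ ((24*p1*p2*r0 - (12*p1^2+6*p0*p2)*r1 + 12*p0*p1*r2 - 6*p0^2*r3)*q1 - (12*p2^2*r0 - 6*p1*p2*r1 + 6*p0*p1*r3 - 12*p0^2*r4)*q0 = 0) := by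
    by_cases hv : p2*q2 = 0
    · rename' hv => hv0
      by_cases hv : p2*q1 + p1*q2 = 0
      · rename' hv => hv1
        by_cases hv : p2*q0 + 4*p1*q1 + p0*q2 = 0
        · rename' hv => hv2
          by_cases hv : p1*q0 + p0*q1 = 0
          · rename' hv => hv3
            by_cases hv : p0*q0 = 0
            · exact absurd ⟨hv0, hv1, hv2, hv3, hv⟩ hvne
            · refine ⟨eq_zero_of_mul'' hv ?_, eq_zero_of_mul'' hv ?_, eq_zero_of_mul'' hv ?_⟩
              · linear_combination ((-1/2)*p0^2*q2 + p0*p1*q1)*hapol + (-12*p0*p2*q2*r0 + 6*p0*p1*q2*r1 + 6*p0*p2*q1*r1 - 2*p0^2*q2*r2 - 8*p0*p1*q1*r2 + 6*p0^2*q1*r3)*horth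
              · linear_combination (p0*p1*q0)*hapol + (6*p0*p2*q0*r1 - 8*p0*p1*q0*r2 + 6*p0^2*q0*r3)*horth
              · linear_combination ((1/2)*p0^2*q0)*hapol + (12*p0*p2*q0*r0 - 6*p0*p1*q0*r1 + 2*p0^2*q0*r2)*horth
          · refine ⟨eq_zero_of_mul'' hv ?_, eq_zero_of_mul'' hv ?_, eq_zero_of_mul'' hv ?_⟩
            · linear_combination ((-1/2)*p0*p1*q2 + (1/2)*p0*p2*q1 + p1^2*q1)*hapol + (-12*p1*p2*q2*r0 + 6*p1^2*q2*r1 + 6*p1*p2*q1*r1 - 2*p0*p1*q2*r2 + 2*p0*p2*q1*r2 - 8*p1^2*q1*r2 + 12*p0^2*q1*r4)*horth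
            · linear_combination (p0*p1*q1 + p1^2*q0)*hapol + (6*p0*p2*q1*r1 + 6*p1*p2*q0*r1 - 8*p0*p1*q1*r2 - 8*p1^2*q0*r2 + 6*p0^2*q1*r3 + 6*p0*p1*q0*r3)*horth
            · linear_combination ((1/2)*p0^2*q1 + (1/2)*p0*p1*q0)*hapol + (12*p0*p2*q1*r0 + 12*p1*p2*q0*r0 - 6*p0*p1*q1*r1 - 6*p1^2*q0*r1 + 2*p0^2*q1*r2 + 2*p0*p1*q0*r2)*horth
        · refine ⟨eq_zero_of_mul'' hv ?_, eq_zero_of_mul'' hv ?_, eq_zero_of_mul'' hv ?_⟩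
          · linear_combination (3*p1*p2*q1)*hapol + (-12*p2^2*q2*r0 + 6*p1*p2*q2*r1 + 6*p2^2*q1*r1 - 6*p0*p1*q2*r3 + 6*p0*p2*q1*r3 - 24*p1^2*q1*r3 + 12*p0^2*q2*r4 + 48*p0*p1*q1*r4)*horth
          · linear_combination (p0*p1*q2 + 4*p1^2*q1 + p1*p2*q0)*hapol + (6*p0*p2*q2*r1 + 24*p1*p2*q1*r1 + 6*p2^2*q0*r1 - 8*p0*p1*q2*r2 - 32*p1^2*q1*r2 - 8*p1*p2*q0*r2 + 6*p0^2*q2*r3 + 24*p0*p1*q1*r3 + 6*p0*p2*q0*r3)*horth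
          · linear_combination ((1/2)*p0^2*q2 + 2*p0*p1*q1 + (1/2)*p0*p2*q0)*hapol + (12*p0*p2*q2*r0 + 48*p1*p2*q1*r0 + 12*p2^2*q0*r0 - 6*p0*p1*q2*r1 - 24*p1^2*q1*r1 - 6*p1*p2*q0*r1 + 2*p0^2*q2*r2 + 8*p0*p1*q1*r2 + 2*p0*p2*q0*r2)*horth
      · refine ⟨eq_zero_of_mul'' hv ?_, eq_zero_of_mul'' hv ?_, eq_zero_of_mul'' hv ?_⟩
        · linear_combination ((1/2)*p1*p2*q2 + (1/2)*p2^2*q1)*hapol + (2*p1*p2*q2*r2 + 2*p2^2*q1*r2 - 6*p1^2*q2*r3 - 6*p1*p2*q1*r3 + 12*p0*p1*q2*r4 + 12*p0*p2*q1*r4)*horth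
        · linear_combination (p1^2*q2 + p1*p2*q1)*hapol + (6*p1*p2*q2*r1 + 6*p2^2*q1*r1 - 8*p1^2*q2*r2 - 8*p1*p2*q1*r2 + 6*p0*p1*q2*r3 + 6*p0*p2*q1*r3)*horth
        · linear_combination ((1/2)*p0*p1*q2 + (1/2)*p0*p2*q1)*hapol + (12*p1*p2*q2*r0 + 12*p2^2*q1*r0 - 6*p1^2*q2*r1 - 6*p1*p2*q1*r1 + 2*p0*p1*q2*r2 + 2*p0*p2*q1*r2)*horth
    · refine ⟨eq_zero_of_mul'' hv ?_, eq_zero_of_mul'' hv ?_, eq_zero_of_mul'' hv ?_⟩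
      · linear_combination (1/2)*p2^2*q2*hapol + (2*p2^2*q2*r2 - 6*p1*p2*q2*r3 + 12*p0*p2*q2*r4)*horth
      · linear_combination (p1*p2*q2)*hapol + (6*p2^2*q2*r1 - 8*p1*p2*q2*r2 + 6*p0*p2*q2*r3)*horth
      · linear_combination ((1/2)*p0*p2*q2)*hapol + (12*p2^2*q2*r0 - 6*p1*p2*q2*r1 + 2*p0*p2*q2*r2)*horth
  by_cases hq0 : q0 = 0
  · by_cases hq1 : q1 = 0
    · have hq2 : q2 ≠ 0 := fun h => hq ⟨hq0, hq1, h⟩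
      refine ⟨(6*p2^2*r1 - 12*p1*p2*r2 + (12*p1^2+6*p0*p2)*r3 - 24*p0*p1*r4)/q2, ?_, ?_, ?_⟩
      · have e0 : q2*(24*p1*p2*r0 - (12*p1^2+6*p0*p2)*r1 + 12*p0*p1*r2 - 6*p0^2*r3) = 0 := by linear_combination hC1 + (6*p2^2*r1 - 12*p1*p2*r2 + (12*p1^2+6*p0*p2)*r3 - 24*p0*p1*r4)*hq0
        rw [hq0]
        simpa using eq_zero_of_mul'' hq2 e0
      · have e1 : q2*(12*p2^2*r0 - 6*p1*p2*r1 + 6*p0*p1*r3 - 12*p0^2*r4) = 0 := by linear_combination hC0 + (6*p2^2*r1 - 12*p1*p2*r2 + (12*p1^2+6*p0*p2)*r3 - 24*p0*p1*r4)*hq1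
        rw [hq1]
        simpa using eq_zero_of_mul'' hq2 e1
      · field_simp
    · refine ⟨(12*p2^2*r0 - 6*p1*p2*r1 + 6*p0*p1*r3 - 12*p0^2*r4)/q1, ?_, ?_, ?_⟩
      · have e0 : q1*(24*p1*p2*r0 - (12*p1^2+6*p0*p2)*r1 + 12*p0*p1*r2 - 6*p0^2*r3) = 0 := by linear_combination hC2 + (12*p2^2*r0 - 6*p1*p2*r1 + 6*p0*p1*r3 - 12*p0^2*r4)*hq0
        rw [hq0]
        simpa using eq_zero_of_mul'' hq1 e0
      · field_simp
      · rw [div_mul_eq_mul_div, eq_div_iff hq1]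
        linear_combination -hC0
  · refine ⟨(24*p1*p2*r0 - (12*p1^2+6*p0*p2)*r1 + 12*p0*p1*r2 - 6*p0^2*r3)/q0, ?_, ?_, ?_⟩
    · field_simp
    · rw [div_mul_eq_mul_div, eq_div_iff hq0]
      linear_combination -hC2
    · rw [div_mul_eq_mul_div, eq_div_iff hq0]
      linear_combination -hC1

end claimR



/-- A quartic `a₀z⁴ + a₁z³ + a₂z² + a₃z + a₄` and its derivatives. -/
def quartic (a0 a1 a2 a3 a4 z : ℝ) : ℝ := a0 * z ^ 4 + a1 * z ^ 3 + a2 * z ^ 2 + a3 * z + a4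
def quarticD1 (a0 a1 a2 a3 a4 z : ℝ) : ℝ := 4 * a0 * z ^ 3 + 3 * a1 * z ^ 2 + 2 * a2 * z + a3
def quarticD2 (a0 a1 a2 a3 a4 z : ℝ) : ℝ := 12 * a0 * z ^ 2 + 6 * a1 * z + 2 * a2
def quarticD3 (a0 a1 a2 a3 a4 z : ℝ) : ℝ := 24 * a0 * z + 6 * a1

/-- The apolarity pairing `⟨F,G⟩₄ = F''''G − F'''G' + F''G'' − F'G''' + FG''''`
of two quartics, evaluated at `z`. -/
def apolarity4 (f0 f1 f2 f3 f4 g0 g1 g2 g3 g4 z : ℝ) : ℝ :=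
  24 * f0 * quartic g0 g1 g2 g3 g4 z
    - quarticD3 f0 f1 f2 f3 f4 z * quarticD1 g0 g1 g2 g3 g4 z
    + quarticD2 f0 f1 f2 f3 f4 z * quarticD2 g0 g1 g2 g3 g4 z
    - quarticD1 f0 f1 f2 f3 f4 z * quarticD3 g0 g1 g2 g3 g4 z
    + quartic f0 f1 f2 f3 f4 z * (24 * g0)

/-- The left-hand side `(p(x,y)², A(x))⁽²⁾ + (p(x,y)², B(y))⁽²⁾` of the
constant-scalar-curvature equation for the compatible metric determined by `p`. -/
noncomputable def cscLHS (p0 p1 p2 : ℝ) (A B : ℝ → ℝ) (x y : ℝ) : ℝ :=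
  (p0 * x * y + p1 * (x + y) + p2) ^ 2 * deriv (deriv A) x
    - 6 * (p0 * y + p1) * (p0 * x * y + p1 * (x + y) + p2) * deriv A x
    + 12 * (p0 * y + p1) ^ 2 * A x
    + (p0 * x * y + p1 * (x + y) + p2) ^ 2 * deriv (deriv B) y
    - 6 * (p0 * x + p1) * (p0 * x * y + p1 * (x + y) + p2) * deriv B y
    + 12 * (p0 * x + p1) ^ 2 * B y

/-- Classification of ambitoric metrics of Plebański–Demiański type: the compatible
metric with diagonal Ricci tensor determined by `p` has constant scalar curvature iff
`A = pρ + R`, `B = pρ − R` with `ρ` a quadratic orthogonal to `p` and `R` a quartic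
apolar to the quartic `pq`. -/
theorem ambitoric_csc_classification
    (p0 p1 p2 q0 q1 q2 : ℝ)
    (hp : ¬(p0 = 0 ∧ p1 = 0 ∧ p2 = 0)) (hq : ¬(q0 = 0 ∧ q1 = 0 ∧ q2 = 0))
    (horth : 2 * p1 * q1 - (p2 * q0 + p0 * q2) = 0)
    (A B : ℝ → ℝ) (hA : ContDiff ℝ (⊤ : ℕ∞) A) (hB : ContDiff ℝ (⊤ : ℕ∞) B) :
    (∃ k : ℝ, ∀ x y : ℝ,
        cscLHS p0 p1 p2 A B x y = k * (x - y) * (q0 * x * y + q1 * (x + y) + q2))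
    ↔ (∃ ρ0 ρ1 ρ2 r0 r1 r2 r3 r4 : ℝ,
        2 * ρ1 * p1 - (ρ2 * p0 + ρ0 * p2) = 0 ∧
        (∀ z : ℝ, apolarity4 (p0 * q0) (2 * p0 * q1 + 2 * p1 * q0)
            (p0 * q2 + 4 * p1 * q1 + p2 * q0) (2 * p1 * q2 + 2 * p2 * q1) (p2 * q2)
            r0 r1 r2 r3 r4 z = 0) ∧
        (∀ z : ℝ, A z = (p0 * z ^ 2 + 2 * p1 * z + p2) * (ρ0 * z ^ 2 + 2 * ρ1 * z + ρ2)
            + quartic r0 r1 r2 r3 r4 z) ∧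
        (∀ z : ℝ, B z = (p0 * z ^ 2 + 2 * p1 * z + p2) * (ρ0 * z ^ 2 + 2 * ρ1 * z + ρ2)
            - quartic r0 r1 r2 r3 r4 z)) := by
  constructor
  · rintro ⟨k, hk⟩
    have hA' : ContDiff ℝ ∞ A := hA.of_le (by simp)
    have hB' : ContDiff ℝ ∞ B := hB.of_le (by simp)
    have e2A : iteratedDeriv 2 A = deriv (deriv A) := by rw [iteratedDeriv_succ, iteratedDeriv_one]
    have e2B : iteratedDeriv 2 B = deriv (deriv B) := by rw [iteratedDeriv_succ, iteratedDeriv_one]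
    have hA5 : ∀ x, iteratedDeriv 5 A x = 0 := by
      have key : ∀ y x : ℝ, ((p0*y+p1)*x+(p1*y+p2))^2 * iteratedDeriv 5 A x = 0 := by
        intro y
        apply third_deriv_vanish A hA' (p0*y+p1) (p1*y+p2)
          ((p0*y+p1)^2*deriv (deriv B) y - 6*p0*(p0*y+p1)*deriv B y + 12*p0^2*B y - k*(q1+q0*y))
          (2*(p0*y+p1)*(p1*y+p2)*deriv (deriv B) y - 6*(p0*(p1*y+p2)+p1*(p0*y+p1))*deriv B y + 24*p0*p1*B y - k*(q2-q0*y^2))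
          ((p1*y+p2)^2*deriv (deriv B) y - 6*p1*(p1*y+p2)*deriv B y + 12*p1^2*B y + k*(q1*y^2+q2*y))
        intro x
        have hx := hk x y
        simp only [cscLHS] at hx
        simp only [iteratedDeriv_zero, iteratedDeriv_one, e2A]
        linear_combination hx
      have hcont : Continuous (iteratedDeriv 5 A) := by
        rw [iteratedDeriv_eq_iterate]; exact (hA'.iterate_deriv 5).continuous
      exact d5_zero p0 p1 p2 hp (iteratedDeriv 5 A) hcont (fun x y => by linear_combination key y x)
    have hB5 : ∀ y, iteratedDeriv 5 B y = 0 := by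
      have key : ∀ x y : ℝ, ((p0*x+p1)*y+(p1*x+p2))^2 * iteratedDeriv 5 B y = 0 := by
        intro x
        apply third_deriv_vanish B hB' (p0*x+p1) (p1*x+p2)
          ((p0*x+p1)^2*deriv (deriv A) x - 6*p0*(p0*x+p1)*deriv A x + 12*p0^2*A x + k*(q0*x+q1))
          (2*(p0*x+p1)*(p1*x+p2)*deriv (deriv A) x - 6*(p0*(p1*x+p2)+p1*(p0*x+p1))*deriv A x + 24*p0*p1*A x - k*(q0*x^2-q2))
          ((p1*x+p2)^2*deriv (deriv A) x - 6*p1*(p1*x+p2)*deriv A x + 12*p1^2*A x - k*(q1*x^2+q2*x))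
        intro y
        have hx := hk x y
        simp only [cscLHS] at hx
        simp only [iteratedDeriv_zero, iteratedDeriv_one, e2B]
        linear_combination hx
      have hcont : Continuous (iteratedDeriv 5 B) := by
        rw [iteratedDeriv_eq_iterate]; exact (hB'.iterate_deriv 5).continuous
      exact d5_zero p0 p1 p2 hp (iteratedDeriv 5 B) hcont (fun x y => by linear_combination key y x)
    obtain ⟨a0, a1, a2, a3, a4, hA4⟩ : ∃ a0 a1 a2 a3 a4 : ℝ, ∀ x, A x = a0*x^4+a1*x^3+a2*x^2+a3*x+a4 :=
      ⟨_, _, _, _, _, quartic_of_d5 A hA' hA5⟩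
    obtain ⟨b0, b1, b2, b3, b4, hB4⟩ : ∃ b0 b1 b2 b3 b4 : ℝ, ∀ x, B x = b0*x^4+b1*x^3+b2*x^2+b3*x+b4 :=
      ⟨_, _, _, _, _, quartic_of_d5 B hB' hB5⟩
    obtain ⟨hdA1, hdA2⟩ := derivs_of_quartic A a0 a1 a2 a3 a4 hA4
    obtain ⟨hdB1, hdB2⟩ := derivs_of_quartic B b0 b1 b2 b3 b4 hB4
    have hkPoly : ∀ x y : ℝ,
        (p0*x*y+p1*(x+y)+p2)^2*(12*a0*x^2+6*a1*x+2*a2) - 6*(p0*y+p1)*(p0*x*y+p1*(x+y)+p2)*(4*a0*x^3+3*a1*x^2+2*a2*x+a3) + 12*(p0*y+p1)^2*(a0*x^4+a1*x^3+a2*x^2+a3*x+a4) + (p0*x*y+p1*(x+y)+p2)^2*(12*b0*y^2+6*b1*y+2*b2) - 6*(p0*x+p1)*(p0*x*y+p1*(x+y)+p2)*(4*b0*y^3+3*b1*y^2+2*b2*y+b3) + 12*(p0*x+p1)^2*(b0*y^4+b1*y^3+b2*y^2+b3*y+b4)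
        = k*(x-y)*(q0*x*y+q1*(x+y)+q2) := by
      intro x y
      have hx := hk x y
      simp only [cscLHS] at hx
      rw [hdA2 x, hdA1 x, hA4 x, hdB2 y, hdB1 y, hB4 y] at hx
      linear_combination hx
    have hG1 : 4*p2^2*((a2+b2)/2) - 12*p1*p2*((a3+b3)/2) + 24*p1^2*((a4+b4)/2) = 0 := by
      linear_combination (1) * hkPoly 0 0
    have hG2 : 6*p2^2*((a1+b1)/2) - 4*p1*p2*((a2+b2)/2) - 6*p0*p2*((a3+b3)/2) + 24*p0*p1*((a4+b4)/2) = 0 := by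
      linear_combination (1/4) * hkPoly 1 0 + (-1/4) * hkPoly (-1) 0 + (1/4) * hkPoly 0 1 + (-1/4) * hkPoly 0 (-1)
    have hG3 : 12*p2^2*((a0+b0)/2) - 6*p1*p2*((a1+b1)/2) + 4*p1^2*((a2+b2)/2) - 6*p0*p1*((a3+b3)/2) + 12*p0^2*((a4+b4)/2) = 0 := by
      linear_combination (-1) * hkPoly 0 0 + (1/4) * hkPoly 1 0 + (1/4) * hkPoly (-1) 0 + (1/4) * hkPoly 0 1 + (1/4) * hkPoly 0 (-1)
    have hG4 : 24*p1*p2*((a1+b1)/2) - 16*p1^2*((a2+b2)/2) - 16*p0*p2*((a2+b2)/2) + 24*p0*p1*((a3+b3)/2) = 0 := by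
      linear_combination (-3/4) * hkPoly 0 1 + (1) * hkPoly 1 1 + (1/4) * hkPoly (-1) (-1) + (-1/4) * hkPoly 1 (-1) + (-1/4) * hkPoly 2 1
    have hG5 : 24*p1*p2*((a0+b0)/2) - 6*p0*p2*((a1+b1)/2) - 4*p0*p1*((a2+b2)/2) + 6*p0^2*((a3+b3)/2) = 0 := by
      linear_combination (-1/4) * hkPoly 1 0 + (1/4) * hkPoly (-1) 0 + (-1/4) * hkPoly 0 1 + (1/4) * hkPoly 0 (-1) + (1/4) * hkPoly 1 1 + (-1/4) * hkPoly (-1) (-1)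
    have hG6 : 24*p1^2*((a0+b0)/2) - 12*p0*p1*((a1+b1)/2) + 4*p0^2*((a2+b2)/2) = 0 := by
      linear_combination (1) * hkPoly 0 0 + (-1/2) * hkPoly 1 0 + (-1/2) * hkPoly (-1) 0 + (1/4) * hkPoly 0 1 + (-1/2) * hkPoly 0 (-1) + (-1/2) * hkPoly 1 1 + (1/4) * hkPoly (-1) (-1) + (1/4) * hkPoly 1 (-1) + (1/4) * hkPoly 2 1
    have hK0 : 24*p1*p2*((a0-b0)/2) - (12*p1^2+6*p0*p2)*((a1-b1)/2) + 12*p0*p1*((a2-b2)/2) - 6*p0^2*((a3-b3)/2) = k*q0 := by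
      linear_combination (1/4) * hkPoly 1 0 + (-1/4) * hkPoly (-1) 0 + (1/2) * hkPoly 0 1 + (1/4) * hkPoly 0 (-1) + (-3/4) * hkPoly 1 1 + (-1/4) * hkPoly 1 (-1) + (1/4) * hkPoly 2 1
    have hK1 : 12*p2^2*((a0-b0)/2) - 6*p1*p2*((a1-b1)/2) + 6*p0*p1*((a3-b3)/2) - 12*p0^2*((a4-b4)/2) = k*q1 := by
      linear_combination (1/4) * hkPoly 1 0 + (1/4) * hkPoly (-1) 0 + (-1/4) * hkPoly 0 1 + (-1/4) * hkPoly 0 (-1)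
    have hK2 : 6*p2^2*((a1-b1)/2) - 12*p1*p2*((a2-b2)/2) + (12*p1^2+6*p0*p2)*((a3-b3)/2) - 24*p0*p1*((a4-b4)/2) = k*q2 := by
      linear_combination (1/4) * hkPoly 1 0 + (-1/4) * hkPoly (-1) 0 + (-1/4) * hkPoly 0 1 + (1/4) * hkPoly 0 (-1)
    obtain ⟨ρ0, ρ1, ρ2, horthρ, hs0, hs1, hs2, hs3, hs4⟩ :=
      claimS p0 p1 p2 ((a0+b0)/2) ((a1+b1)/2) ((a2+b2)/2) ((a3+b3)/2) ((a4+b4)/2) hp hG1 hG2 hG3 hG4 hG5 hG6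
    have hapol := claimR_fwd p0 p1 p2 q0 q1 q2 ((a0-b0)/2) ((a1-b1)/2) ((a2-b2)/2) ((a3-b3)/2) ((a4-b4)/2) k hp horth hK0 hK1 hK2
    refine ⟨ρ0, ρ1, ρ2, (a0-b0)/2, (a1-b1)/2, (a2-b2)/2, (a3-b3)/2, (a4-b4)/2, horthρ, ?_, ?_, ?_⟩
    · intro z
      simp only [apolarity4, quartic, quarticD1, quarticD2, quarticD3]
      linear_combination hapol
    · intro z
      rw [hA4 z]
      simp only [quartic]
      linear_combination z^4*hs0 + z^3*hs1 + z^2*hs2 + z*hs3 + hs4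
    · intro z
      rw [hB4 z]
      simp only [quartic]
      linear_combination z^4*hs0 + z^3*hs1 + z^2*hs2 + z*hs3 + hs4
  · rintro ⟨ρ0, ρ1, ρ2, r0, r1, r2, r3, r4, horthρ, hapolar, hAeq, hBeq⟩
    have hapol : 24*p2*q2*r0 - 12*(p2*q1+p1*q2)*r1 + (4*p2*q0+16*p1*q1+4*p0*q2)*r2 - 12*(p1*q0+p0*q1)*r3 + 24*p0*q0*r4 = 0 := by
      have h0 := hapolar 0
      simp only [apolarity4, quartic, quarticD1, quarticD2, quarticD3] at h0
      linear_combination h0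
    obtain ⟨k, hE0, hE1, hE2⟩ := claimR_rev p0 p1 p2 q0 q1 q2 r0 r1 r2 r3 r4 hp hq horth hapol
    have hA4 : ∀ z, A z = (p0*ρ0+r0)*z^4 + (2*p0*ρ1+2*p1*ρ0+r1)*z^3 + (p0*ρ2+4*p1*ρ1+p2*ρ0+r2)*z^2 + (2*p1*ρ2+2*p2*ρ1+r3)*z + (p2*ρ2+r4) := by
      intro z; rw [hAeq z]; simp only [quartic]; ring
    have hB4 : ∀ z, B z = (p0*ρ0-r0)*z^4 + (2*p0*ρ1+2*p1*ρ0-r1)*z^3 + (p0*ρ2+4*p1*ρ1+p2*ρ0-r2)*z^2 + (2*p1*ρ2+2*p2*ρ1-r3)*z + (p2*ρ2-r4) := by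
      intro z; rw [hBeq z]; simp only [quartic]; ring
    obtain ⟨hdA1, hdA2⟩ := derivs_of_quartic A _ _ _ _ _ hA4
    obtain ⟨hdB1, hdB2⟩ := derivs_of_quartic B _ _ _ _ _ hB4
    refine ⟨k, fun x y => ?_⟩
    simp only [cscLHS]
    rw [hdA2 x, hdA1 x, hA4 x, hdB2 y, hdB1 y, hB4 y]
    linear_combination (x^2*y - x*y^2)*hE0 + (x^2-y^2)*hE1 + (x-y)*hE2 +
      ((-4*p2^2) + (-8*p1*p2)*(x+y) + (8*p1^2-12*p0*p2)*(x^2+y^2) + (-32*p1^2+16*p0*p2)*(x*y) + (-8*p0*p1)*(x^2*y+x*y^2) + (-4*p0^2)*(x^2*y^2))*horthρ
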